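/- arXiv:2206.03438 — 2 statements merged into one kernel-verified Lean document; each statement's English description precedes it below -/
import Mathlib

section
/- Let K be a valued field, let B₁, B₂ ⊆ K be balls, and let f : B₁ → B₂ satisfy |f(x) − f(x')| < |x − x'| for all distinct x, x' ∈ B₁. Fix y₀ ∈ B₂ and set B := B₁ × B₂. Then the map φ : B → B defined by φ(x, y) = (x, y − y₀ + f(x)) is a well-defined risometry of B, and φ maps the horizontal segment B₁ × {y₀} onto the graph of f. -/
/-- A (valuative) ball in `K`: an infinite set such that together with any two
points `x, x'` it contains every `y` with `|x − y| ≤ |x − x'|`. -/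
def IsBall1 {K Γ₀ : Type*} [Field K] [LinearOrderedCommGroupWithZero Γ₀]
    (v : Valuation K Γ₀) (B : Set K) : Prop :=
  B.Infinite ∧ ∀ x ∈ B, ∀ x' ∈ B, ∀ y : K, v (x - y) ≤ v (x - x') → y ∈ B

/-- The sup-norm on `K²`. -/
noncomputable def supVal2 {K Γ₀ : Type*} [Field K] [LinearOrderedCommGroupWithZero Γ₀]
    (v : Valuation K Γ₀) (p : K × K) : Γ₀ :=
  max (v p.1) (v p.2)

/-- A risometry from `B` onto `B'` in `K²`. -/
def IsRisometryOn2 {K Γ₀ : Type*} [Field K] [LinearOrderedCommGroupWithZero Γ₀]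
    (v : Valuation K Γ₀) (φ : K × K → K × K) (B B' : Set (K × K)) : Prop :=
  Set.BijOn φ B B' ∧
    ∀ p ∈ B, ∀ q ∈ B, p ≠ q →
      supVal2 v (φ p - φ q - (p - q)) < supVal2 v (p - q)

/-! The map `φ` only moves points vertically, and by the amount `f x - y₀`. Two points of
`B₁ × B₂` are therefore moved relative to each other by `(0, f x - f x')`, which is smaller
than their distance: by the contraction property of `f` if `x ≠ x'`, and because it is `0`
otherwise. That `φ` maps `B₁ × B₂` onto itself is the ultrametric fact that a ball is closed
under `u + (w - s)`. -/

section

variable {K Γ₀ : Type*} [Field K] [LinearOrderedCommGroupWithZero Γ₀] {v : Valuation K Γ₀}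

lemma IsBall1.add_sub_mem {B : Set K} (hB : IsBall1 v B) {u w s : K}
    (hu : u ∈ B) (hw : w ∈ B) (hs : s ∈ B) : u + (w - s) ∈ B := by
  have hdist : v (u - (u + (w - s))) ≤ max (v (u - w)) (v (u - s)) := by
    calc v (u - (u + (w - s))) = v ((u - w) - (u - s)) := congrArg v (by ring)
      _ ≤ max (v (u - w)) (v (u - s)) := v.map_sub _ _
  rcases le_total (v (u - s)) (v (u - w)) with h | h
  · exact hB.2 u hu w hw _ (hdist.trans (max_le le_rfl h))
  · exact hB.2 u hu s hs _ (hdist.trans (max_le h le_rfl))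

def verticalTranslation (f : K → K) (y₀ : K) (p : K × K) : K × K :=
  (p.1, p.2 - y₀ + f p.1)

variable {B₁ B₂ : Set K} {f : K → K} {y₀ : K}

lemma mapsTo_verticalTranslation (hB₂ : IsBall1 v B₂) (hmap : ∀ x ∈ B₁, f x ∈ B₂)
    (hy₀ : y₀ ∈ B₂) :
    Set.MapsTo (verticalTranslation f y₀) (B₁ ×ˢ B₂) (B₁ ×ˢ B₂) := by
  rintro ⟨x, y⟩ ⟨hx, hy⟩
  refine ⟨hx, ?_⟩
  convert hB₂.add_sub_mem (hmap x hx) hy hy₀ using 1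
  simp only [verticalTranslation]
  ring

lemma bijOn_verticalTranslation (hB₂ : IsBall1 v B₂) (hmap : ∀ x ∈ B₁, f x ∈ B₂)
    (hy₀ : y₀ ∈ B₂) :
    Set.BijOn (verticalTranslation f y₀) (B₁ ×ˢ B₂) (B₁ ×ˢ B₂) := by
  let ψ : K × K → K × K := fun p => (p.1, p.2 + (y₀ - f p.1))
  have hψ : Set.MapsTo ψ (B₁ ×ˢ B₂) (B₁ ×ˢ B₂) := fun p ⟨hx, hy⟩ =>
    ⟨hx, hB₂.add_sub_mem hy hy₀ (hmap p.1 hx)⟩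
  refine Set.InvOn.bijOn ⟨fun p _ => ?_, fun p _ => ?_⟩
    (mapsTo_verticalTranslation hB₂ hmap hy₀) hψ <;>
  · ext
    · rfl
    · simp only [ψ, verticalTranslation]
      ring

lemma verticalTranslation_sub_sub (p q : K × K) :
    verticalTranslation f y₀ p - verticalTranslation f y₀ q - (p - q) = (0, f p.1 - f q.1) := by
  ext
  · simp [verticalTranslation]
  · simp only [verticalTranslation, Prod.snd_sub]
    ring

lemma isRisometryOn2_verticalTranslation (hB₂ : IsBall1 v B₂) (hmap : ∀ x ∈ B₁, f x ∈ B₂)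
    (hf : ∀ x ∈ B₁, ∀ x' ∈ B₁, x ≠ x' → v (f x - f x') < v (x - x'))
    (hy₀ : y₀ ∈ B₂) :
    IsRisometryOn2 v (verticalTranslation f y₀) (B₁ ×ˢ B₂) (B₁ ×ˢ B₂) := by
  refine ⟨bijOn_verticalTranslation hB₂ hmap hy₀, ?_⟩
  rintro ⟨x, y⟩ ⟨hx, -⟩ ⟨x', y'⟩ ⟨hx', -⟩ hne
  rw [verticalTranslation_sub_sub]
  simp only [supVal2, map_zero, zero_le, max_eq_right, Prod.mk_sub_mk]
  rcases eq_or_ne x x' with rfl | hxx'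
  · have hyy' : y - y' ≠ 0 := sub_ne_zero.mpr fun h => hne (by rw [h])
    rw [sub_self, map_zero]
    exact (v.pos_iff.mpr hyy').trans_le (le_max_right _ _)
  · exact (hf x hx x' hx' hxx').trans_le (le_max_left _ _)

lemma image_verticalTranslation_prod_singleton :
    verticalTranslation f y₀ '' (B₁ ×ˢ {y₀}) = {p : K × K | p.1 ∈ B₁ ∧ p.2 = f p.1} := by
  ext ⟨a, b⟩
  simp only [verticalTranslation, Set.mem_image, Set.mem_prod, Set.mem_singleton_iff,
    Set.mem_ofPred_eq, Prod.mk.injEq, Prod.exists]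
  constructor
  · rintro ⟨x, y, ⟨hx, rfl⟩, rfl, rfl⟩
    exact ⟨hx, by ring⟩
  · rintro ⟨ha, rfl⟩
    exact ⟨a, y₀, ⟨ha, rfl⟩, rfl, by ring⟩

end

theorem vertical_translation_risometry_general {K Γ₀ : Type*} [Field K]
    [LinearOrderedCommGroupWithZero Γ₀] (v : Valuation K Γ₀)
    (B₁ B₂ : Set K) (hB₂ : IsBall1 v B₂)
    (f : K → K) (hmap : ∀ x ∈ B₁, f x ∈ B₂)
    (hf : ∀ x ∈ B₁, ∀ x' ∈ B₁, x ≠ x' → v (f x - f x') < v (x - x'))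
    (y₀ : K) (hy₀ : y₀ ∈ B₂) :
    IsRisometryOn2 v (fun p => (p.1, p.2 - y₀ + f p.1)) (B₁ ×ˢ B₂) (B₁ ×ˢ B₂) ∧
      (fun p : K × K => (p.1, p.2 - y₀ + f p.1)) '' (B₁ ×ˢ ({y₀} : Set K)) =
        {p : K × K | p.1 ∈ B₁ ∧ p.2 = f p.1} :=
  ⟨isRisometryOn2_verticalTranslation hB₂ hmap hf hy₀, image_verticalTranslation_prod_singleton⟩

/-- if `f : B₁ → B₂` satisfies `|f(x) − f(x')| < |x − x'|` on the ball `B₁`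
and `y₀ ∈ B₂`, then `φ(x, y) = (x, y − y₀ + f(x))` is a well-defined risometry of
`B := B₁ × B₂`, mapping the horizontal segment `B₁ × {y₀}` onto the graph of `f`. -/
theorem vertical_translation_risometry {K Γ₀ : Type*} [Field K]
    [LinearOrderedCommGroupWithZero Γ₀] (v : Valuation K Γ₀)
    (B₁ B₂ : Set K) (hB₁ : IsBall1 v B₁) (hB₂ : IsBall1 v B₂)
    (f : K → K) (hmap : ∀ x ∈ B₁, f x ∈ B₂)
    (hf : ∀ x ∈ B₁, ∀ x' ∈ B₁, x ≠ x' → v (f x - f x') < v (x - x'))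
    (y₀ : K) (hy₀ : y₀ ∈ B₂) :
    IsRisometryOn2 v (fun p => (p.1, p.2 - y₀ + f p.1)) (B₁ ×ˢ B₂) (B₁ ×ˢ B₂) ∧
      (fun p : K × K => (p.1, p.2 - y₀ + f p.1)) '' (B₁ ×ˢ ({y₀} : Set K)) =
        {p : K × K | p.1 ∈ B₁ ∧ p.2 = f p.1} :=
  vertical_translation_risometry_general v B₁ B₂ hB₂ f hmap hf y₀ hy₀
end

section
/- Let K be a spherically complete valued field, let B ⊆ Kⁿ be a ball, and let g : B → B be strictly contracting, i.e. |g(x) − g(y)| < |x − y| for all distinct x, y ∈ B. Then g has a unique fixed point in B. -/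
/-- The sup-norm on `Kⁿ` induced by a valuation `v : K → Γ₀`. -/
noncomputable def supVal {K Γ₀ : Type*} [Field K] [LinearOrderedCommGroupWithZero Γ₀]
    (v : Valuation K Γ₀) {n : ℕ} (x : Fin n → K) : Γ₀ :=
  letI : OrderBot Γ₀ := { bot := 0, bot_le := fun _ => zero_le' }
  Finset.univ.sup fun i => v (x i)

/-- A (valuative) ball in `Kⁿ` with respect to the sup-norm. -/
def IsBall {K Γ₀ : Type*} [Field K] [LinearOrderedCommGroupWithZero Γ₀]
    (v : Valuation K Γ₀) {n : ℕ} (B : Set (Fin n → K)) : Prop :=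
  B.Infinite ∧ ∀ x ∈ B, ∀ x' ∈ B, ∀ y : Fin n → K,
    supVal v (x - y) ≤ supVal v (x - x') → y ∈ B

/-- `K` is spherically complete: every nested chain of balls in `K` has
non-empty intersection. -/
def SphericallyComplete {K Γ₀ : Type*} [Field K] [LinearOrderedCommGroupWithZero Γ₀]
    (v : Valuation K Γ₀) : Prop :=
  ∀ C : Set (Set K), C.Nonempty → (∀ B ∈ C, IsBall1 v B) →
    IsChain (· ⊆ ·) C → (⋂₀ C).Nonempty

section Aux

variable {K Γ₀ : Type*} [Field K] [LinearOrderedCommGroupWithZero Γ₀]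
  (v : Valuation K Γ₀)

lemma supVal_le_iff {n : ℕ} (x : Fin n → K) (a : Γ₀) :
    supVal v x ≤ a ↔ ∀ i, v (x i) ≤ a := by
  letI : OrderBot Γ₀ := { bot := 0, bot_le := fun _ => zero_le' }
  simp [supVal, Finset.sup_le_iff]

lemma le_supVal {n : ℕ} (x : Fin n → K) (i : Fin n) : v (x i) ≤ supVal v x := by
  exact (supVal_le_iff v x (supVal v x)).1 le_rfl i

lemma supVal_sub_swap {n : ℕ} (x y : Fin n → K) :
    supVal v (x - y) = supVal v (y - x) := by
  have h : ∀ a b : Fin n → K, supVal v (a - b) ≤ supVal v (b - a) := by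
    intro a b
    rw [supVal_le_iff]
    intro i
    rw [Pi.sub_apply, Valuation.map_sub_swap]
    simpa using le_supVal v (b - a) i
  exact le_antisymm (h x y) (h y x)

lemma supVal_sub_triangle {n : ℕ} (x y z : Fin n → K) :
    supVal v (x - z) ≤ max (supVal v (x - y)) (supVal v (y - z)) := by
  rw [supVal_le_iff]
  intro i
  simp only [Pi.sub_apply]
  have h : x i - z i = (x i - y i) + (y i - z i) := by ring
  rw [h]
  refine le_trans (v.map_add _ _) (max_le_max ?_ ?_)
  · simpa using le_supVal v (x - y) i
  · simpa using le_supVal v (y - z) i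

lemma supVal_pos {n : ℕ} {x y : Fin n → K} (h : x ≠ y) : supVal v (x - y) ≠ 0 := by
  intro h0
  apply h
  funext i
  have h1 := le_supVal v (x - y) i
  rw [h0] at h1
  have h2 : v ((x - y) i) = 0 := le_antisymm h1 zero_le'
  rw [Valuation.zero_iff] at h2
  simpa [sub_eq_zero] using h2

/-- A closed ball of "achieved" positive radius in `K` is a ball. -/
lemma isBall1_closedBall (hK : Infinite K) (c : K) (r : Γ₀) (s : K) (hs : s ≠ 0)
    (hsr : v s ≤ r) : IsBall1 v {t | v (t - c) ≤ r} := by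
  constructor
  · -- infinite
    have hS : {x : K | v x ≤ 1}.Infinite := by
      by_contra h
      rw [Set.not_infinite] at h
      have huniv : (Set.univ : Set K).Finite := by
        apply Set.Finite.subset (h.union (h.image (·⁻¹)))
        intro x _
        rcases le_or_gt (v x) 1 with hx | hx
        · exact Or.inl hx
        · right
          refine ⟨x⁻¹, ?_, inv_inv x⟩
          rw [Set.mem_setOf_eq, map_inv₀]
          exact inv_le_one_of_one_le₀ hx.le
      exact Set.infinite_univ huniv
    have hinj : Set.InjOn (fun t => c + s * t) {x : K | v x ≤ 1} := by
      intro a _ b _ hab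
      simp only at hab
      exact mul_left_cancel₀ hs (add_left_cancel hab)
    apply Set.Infinite.mono (s := (fun t => c + s * t) '' {x : K | v x ≤ 1})
    · rintro _ ⟨t, ht, rfl⟩
      simp only [Set.mem_setOf_eq, add_sub_cancel_left]
      rw [v.map_mul]
      calc v s * v t ≤ v s * 1 := mul_le_mul_right ht _
        _ = v s := mul_one _
        _ ≤ r := hsr
    · exact hS.image hinj
  · -- ball property
    intro x hx x' hx' y hy
    simp only [Set.mem_setOf_eq] at *
    have h1 : v (y - c) ≤ max (v (y - x)) (v (x - c)) := by
      have : y - c = (y - x) + (x - c) := by ring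
      rw [this]; exact v.map_add _ _
    have h2 : v (y - x) = v (x - y) := Valuation.map_sub_swap v y x
    have h3 : v (x - x') ≤ max (v (x - c)) (v (c - x')) := by
      have : x - x' = (x - c) + (c - x') := by ring
      rw [this]; exact v.map_add _ _
    have h4 : v (c - x') = v (x' - c) := Valuation.map_sub_swap v c x'
    have h5 : v (x - x') ≤ r := h3.trans (max_le hx (h4 ▸ hx'))
    exact h1.trans (max_le (h2 ▸ hy.trans h5) hx)

/-- Spherical completeness lifts to chains of closed balls in `Kⁿ`. -/
lemma sphericallyComplete_pi (hsph : SphericallyComplete v) (hK : Infinite K) {n : ℕ}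
    (C : Set (Set (Fin n → K))) (hne : C.Nonempty)
    (hballs : ∀ S ∈ C, ∃ c : Fin n → K, ∃ r : Γ₀, (∃ s : K, s ≠ 0 ∧ v s ≤ r) ∧
      S = {y | supVal v (y - c) ≤ r})
    (hchain : IsChain (· ⊆ ·) C) : (⋂₀ C).Nonempty := by
  have himg : ∀ i : Fin n, ∀ c : Fin n → K, ∀ r : Γ₀,
      (fun y : Fin n → K => y i) '' {y | supVal v (y - c) ≤ r} = {t | v (t - c i) ≤ r} := by
    intro i c r
    ext t
    constructor
    · rintro ⟨y, hy, rfl⟩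
      simp only [Set.mem_setOf_eq] at *
      have := le_supVal v (y - c) i
      simp only [Pi.sub_apply] at this
      exact this.trans hy
    · intro ht
      refine ⟨Function.update c i t, ?_, Function.update_self i t c⟩
      simp only [Set.mem_setOf_eq]
      rw [supVal_le_iff]
      intro j
      by_cases hj : j = i
      · subst hj
        simpa using ht
      · simp [Function.update_of_ne hj, zero_le']
  have key : ∀ i : Fin n, (⋂₀ ((fun S => (fun y : Fin n → K => y i) '' S) '' C)).Nonempty := by
    intro i
    apply hsph
    · exact hne.image _
    · rintro _ ⟨S, hS, rfl⟩
      obtain ⟨c, r, ⟨s, hs, hsr⟩, rfl⟩ := hballs S hS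
      show IsBall1 v ((fun y : Fin n → K => y i) '' {y | supVal v (y - c) ≤ r})
      rw [himg]
      exact isBall1_closedBall v hK (c i) r s hs hsr
    · exact hchain.image_of_map_rel _ _ _ (fun _ _ h => Set.image_mono h)
  choose z hz using key
  refine ⟨z, ?_⟩
  intro S hS
  obtain ⟨c, r, hw, rfl⟩ := hballs S hS
  simp only [Set.mem_setOf_eq]
  rw [supVal_le_iff]
  intro i
  have hmem : z i ∈ (fun y : Fin n → K => y i) '' {y | supVal v (y - c) ≤ r} :=
    hz i _ ⟨_, hS, rfl⟩
  rw [himg] at hmem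
  simpa using hmem

end Aux

/-- ultrametric Banach fixed point theorem: a strictly contracting
map from a ball of a spherically complete valued field to itself has a unique
fixed point. -/
theorem strictly_contracting_fixed_point {K Γ₀ : Type*} [Field K]
    [LinearOrderedCommGroupWithZero Γ₀] (v : Valuation K Γ₀)
    (hsph : SphericallyComplete v) {n : ℕ} (B : Set (Fin n → K)) (hB : IsBall v B)
    (g : (Fin n → K) → (Fin n → K)) (hmap : ∀ x ∈ B, g x ∈ B)
    (hg : ∀ x ∈ B, ∀ y ∈ B, x ≠ y → supVal v (g x - g y) < supVal v (x - y)) :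
    ∃! x, x ∈ B ∧ g x = x := by
  have hK : Infinite K := by
    by_contra h
    rw [not_infinite_iff_finite] at h
    exact hB.1 (Set.toFinite B)
  -- existence
  have hex : ∃ x ∈ B, g x = x := by
    by_contra hfixall
    push_neg at hfixall
    set D : (Fin n → K) → Set (Fin n → K) :=
      fun x => {y | supVal v (y - x) ≤ supVal v (x - g x)} with hD
    have hDself : ∀ x, x ∈ D x := by
      intro x
      simp [hD, sub_self, supVal_le_iff, zero_le']
    have hDsubB : ∀ x ∈ B, D x ⊆ B := by
      intro x hx y hy
      apply hB.2 x hx (g x) (hmap x hx) y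
      rw [supVal_sub_swap v x y]
      exact hy
    have hgD : ∀ x, g x ∈ D x := by
      intro x
      simp only [hD, Set.mem_setOf_eq]
      rw [supVal_sub_swap]
    have hmono : ∀ x ∈ B, ∀ y ∈ D x, D y ⊆ D x := by
      intro x hx y hy
      have hyB : y ∈ B := hDsubB x hx hy
      have hy' : supVal v (y - x) ≤ supVal v (x - g x) := hy
      have hy'' : supVal v (x - y) ≤ supVal v (x - g x) := by
        rw [supVal_sub_swap v x y]; exact hy'
      by_cases hxy : x = y
      · subst hxy; exact subset_rfl
      have hry : supVal v (y - g y) ≤ supVal v (x - g x) := by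
        calc supVal v (y - g y)
            ≤ max (supVal v (y - x)) (supVal v (x - g y)) := supVal_sub_triangle v _ _ _
          _ ≤ max (supVal v (y - x))
              (max (supVal v (x - g x)) (supVal v (g x - g y))) :=
                max_le_max le_rfl (supVal_sub_triangle v _ _ _)
          _ ≤ supVal v (x - g x) := by
              apply max_le hy'
              apply max_le le_rfl
              exact le_of_lt ((hg x hx y hyB hxy).trans_le hy'')
      intro z hz
      simp only [hD, Set.mem_setOf_eq] at hz ⊢
      calc supVal v (z - x)
          ≤ max (supVal v (z - y)) (supVal v (y - x)) := supVal_sub_triangle v _ _ _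
        _ ≤ supVal v (x - g x) := max_le (hz.trans hry) hy'
    -- Zorn
    obtain ⟨x₁, hx₁⟩ := hB.1.nonempty
    obtain ⟨m, hm₁, hmS, hmmin⟩ := zorn_superset_nonempty (D '' B) (fun c hc hchain hcne => by
      have hz : (⋂₀ c).Nonempty := by
        apply sphericallyComplete_pi v hsph hK c hcne _ hchain
        intro S hS
        obtain ⟨x, hx, rfl⟩ := hc hS
        refine ⟨x, supVal v (x - g x), ?_, rfl⟩
        have hxg : x ≠ g x := fun h => hfixall x hx h.symm
        obtain ⟨i, hi⟩ : ∃ i, x i ≠ g x i := by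
          by_contra hall
          push_neg at hall
          exact hxg (funext hall)
        refine ⟨x i - g x i, sub_ne_zero_of_ne hi, ?_⟩
        simpa using le_supVal v (x - g x) i
      obtain ⟨z, hz⟩ := hz
      obtain ⟨S₀, hS₀⟩ := hcne
      obtain ⟨x₀, hx₀, rfl⟩ := hc hS₀
      have hzB : z ∈ B := hDsubB x₀ hx₀ (hz _ hS₀)
      refine ⟨D z, ⟨z, hzB, rfl⟩, ?_⟩
      rintro _ hS
      obtain ⟨x, hx, rfl⟩ := hc hS
      exact hmono x hx z (hz _ hS)) (D x₁) ⟨x₁, hx₁, rfl⟩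
    obtain ⟨x₀, hx₀, rfl⟩ := hmS
    have hgx₀ : g x₀ ∈ B := hmap x₀ hx₀
    have hsub : D (g x₀) ⊆ D x₀ := hmono x₀ hx₀ (g x₀) (hgD x₀)
    have heq : D (g x₀) = D x₀ :=
      subset_antisymm hsub (hmmin ⟨g x₀, hgx₀, rfl⟩ hsub)
    have hx₀mem : x₀ ∈ D (g x₀) := heq ▸ hDself x₀
    simp only [hD, Set.mem_setOf_eq] at hx₀mem
    have hxg : x₀ ≠ g x₀ := fun h => hfixall x₀ hx₀ h.symm
    have hlt : supVal v (g x₀ - g (g x₀)) < supVal v (x₀ - g x₀) :=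
      hg x₀ hx₀ (g x₀) hgx₀ hxg
    exact absurd (hx₀mem.trans_lt hlt) (lt_irrefl _)
  obtain ⟨x, hxB, hxfix⟩ := hex
  refine ⟨x, ⟨hxB, hxfix⟩, ?_⟩
  rintro y ⟨hyB, hyfix⟩
  by_contra hne
  have := hg y hyB x hxB hne
  rw [hyfix, hxfix] at this
  exact lt_irrefl _ this
end
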